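/- Consider the signed network coordination game on a network (V, W) with external field h and a partition V = R ∪ S (R, S disjoint) such that the subnetwork (R, W_{RR}) is structurally balanced and the matrix W_{SS} is symmetric. If there exists τ ∈ {−1,+1}^R such that τ_i W_ij τ_j ≥ 0 for all i, j ∈ R and w_i^R + τ_i h_i ≥ w_i^S for every i ∈ R, then there exists a Nash equilibrium x* of the SNC game such that x*_i = τ_i for every i ∈ R. -/
import Mathlib


open Finset Function

noncomputable section

/-- The binary action set `A = {−1, +1}`, as a subtype of `ℝ`. -/
abbrev Act : Type := {r : ℝ // r = 1 ∨ r = -1}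

def onePt : Act := ⟨1, Or.inl rfl⟩

def negOnePt : Act := ⟨-1, Or.inr rfl⟩

def actMul (a b : Act) : Act :=
  ⟨(a : ℝ) * (b : ℝ), by rcases a.2 with h1 | h1 <;> rcases b.2 with h2 | h2 <;> norm_num [h1, h2]⟩

def actNeg (a : Act) : Act :=
  ⟨-(a : ℝ), by rcases a.2 with h1 | h1 <;> norm_num [h1]⟩

/-- Utility of player `i` in the SNC game on the network `(V, W)` with external field `h`. -/
def utility {V : Type*} [Fintype V] (W : V → V → ℝ) (h : V → ℝ) (i : V) (x : V → Act) : ℝ :=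
  h i * (x i : ℝ) + (x i : ℝ) * ∑ j, W i j * (x j : ℝ)

/-- Best response set of player `i` (depends only on `x_{−i}`). -/
def bestResponse {V : Type*} [Fintype V] [DecidableEq V] (W : V → V → ℝ) (h : V → ℝ)
    (i : V) (x : V → Act) : Set Act :=
  {a | ∀ b : Act, utility W h i (Function.update x i b) ≤ utility W h i (Function.update x i a)}

/-- Nash equilibrium of the SNC game. -/
def IsNash {V : Type*} [Fintype V] [DecidableEq V] (W : V → V → ℝ) (h : V → ℝ)
    (x : V → Act) : Prop :=
  ∀ i, x i ∈ bestResponse W h i x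

/-- One step of a best-response path. -/
def BRStep {V : Type*} [Fintype V] [DecidableEq V] (W : V → V → ℝ) (h : V → ℝ)
    (x y : V → Act) : Prop :=
  ∃ i, (∀ j, j ≠ i → y j = x j) ∧ y i ≠ x i ∧ y i ∈ bestResponse W h i x

def GloballyBRReachable {V : Type*} [Fintype V] [DecidableEq V] (W : V → V → ℝ) (h : V → ℝ)
    (X : Set (V → Act)) : Prop :=
  ∀ x : V → Act, ∃ y ∈ X, Relation.ReflTransGen (BRStep W h) x y

def BRInvariant {V : Type*} [Fintype V] [DecidableEq V] (W : V → V → ℝ) (h : V → ℝ)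
    (X : Set (V → Act)) : Prop :=
  ∀ x ∈ X, ∀ y, Relation.ReflTransGen (BRStep W h) x y → y ∈ X

def GloballyBRStable {V : Type*} [Fintype V] [DecidableEq V] (W : V → V → ℝ) (h : V → ℝ)
    (X : Set (V → Act)) : Prop :=
  GloballyBRReachable W h X ∧ BRInvariant W h X

/-- Structural balance of a signed weight matrix. -/
def StructurallyBalanced {V : Type*} (W : V → V → ℝ) : Prop :=
  ∃ P : Set V, (∀ i j, (i ∈ P ↔ j ∈ P) → 0 ≤ W i j) ∧ (∀ i j, ¬(i ∈ P ↔ j ∈ P) → W i j ≤ 0)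

/-- `(h^−, h^+)`-indecomposability of a network. -/
def Indecomposable {V : Type*} [Fintype V] [DecidableEq V] (W : V → V → ℝ)
    (hm hp : V → ℝ) : Prop :=
  ∀ P M : Finset V, P ∪ M = Finset.univ → Disjoint P M → P.Nonempty → M.Nonempty →
    (∃ i ∈ P, ∑ j ∈ P, |W i j| + hp i < ∑ j ∈ M, |W i j|) ∨
    (∃ i ∈ M, (∑ j ∈ M, |W i j|) - hm i < ∑ j ∈ P, |W i j|)


instance : Nonempty Act := ⟨onePt⟩

instance : Finite Act := by
  have hs : Function.Surjective (fun b : Bool => if b then onePt else negOnePt) := by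
    intro a
    rcases a.2 with h | h
    · exact ⟨true, (Subtype.ext h).symm⟩
    · exact ⟨false, (Subtype.ext h).symm⟩
  exact Finite.of_surjective _ hs

lemma act_abs (a : Act) : |(a : ℝ)| = 1 := by
  rcases a.2 with h | h <;> simp [h]

lemma util_eq {V : Type*} [Fintype V] [DecidableEq V] (W : V → V → ℝ) (h : V → ℝ)
    (i : V) (x : V → Act) (hdiag : W i i = 0) (a : Act) :
    utility W h i (Function.update x i a) = (a : ℝ) * (h i + ∑ j, W i j * (x j : ℝ)) := by
  unfold utility
  have hsum : ∑ j, W i j * ((Function.update x i a j : Act) : ℝ)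
      = ∑ j, W i j * (x j : ℝ) := by
    apply Finset.sum_congr rfl
    intro j _
    by_cases hj : j = i
    · subst hj; simp [hdiag]
    · rw [Function.update_of_ne hj]
  rw [Function.update_self, hsum]; ring

lemma br_iff {V : Type*} [Fintype V] [DecidableEq V] (W : V → V → ℝ) (h : V → ℝ)
    (i : V) (x : V → Act) (hdiag : W i i = 0) :
    x i ∈ bestResponse W h i x ↔ 0 ≤ (x i : ℝ) * (h i + ∑ j, W i j * (x j : ℝ)) := by
  set K := h i + ∑ j, W i j * (x j : ℝ) with hK
  constructor
  · intro hbr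
    have := hbr (actNeg (x i))
    rw [util_eq W h i x hdiag, util_eq W h i x hdiag] at this
    have hneg : ((actNeg (x i) : Act) : ℝ) = -((x i : Act) : ℝ) := rfl
    rw [hneg, ← hK] at this
    linarith
  · intro hnn b
    rw [util_eq W h i x hdiag, util_eq W h i x hdiag, ← hK]
    have h1 : (b : ℝ) * K ≤ |(b : ℝ) * K| := le_abs_self _
    have h2 : |(b : ℝ) * K| = |K| := by rw [abs_mul, act_abs, one_mul]
    have h3 : |(x i : ℝ) * K| = |K| := by rw [abs_mul, act_abs, one_mul]
    have h4 : (x i : ℝ) * K = |K| := by rw [← h3, abs_of_nonneg hnn]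
    linarith

lemma potential_diff {V : Type*} [Fintype V] [DecidableEq V]
    (W : V → V → ℝ) (h : V → ℝ) (R S : Finset V)
    (hsym : ∀ p ∈ S, ∀ q ∈ S, W p q = W q p)
    (i : V) (hiS : i ∈ S) (hiR : i ∉ R) (hdiag : W i i = 0)
    (z z' : V → ℝ) (hz : ∀ j, j ≠ i → z' j = z j) :
    ((∑ p ∈ S, ∑ q ∈ S, W p q * z' p * z' q)
      + 2 * ∑ p ∈ S, z' p * (h p + ∑ q ∈ R, W p q * z' q))
    - ((∑ p ∈ S, ∑ q ∈ S, W p q * z p * z q)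
      + 2 * ∑ p ∈ S, z p * (h p + ∑ q ∈ R, W p q * z q))
    = 2 * (z' i - z i) * (h i + (∑ q ∈ R, W i q * z q) + ∑ q ∈ S, W i q * z q) := by
  set d := z' i - z i with hd
  have hzR : ∀ q ∈ R, z' q = z q := fun q hq => hz q (by rintro rfl; exact hiR hq)
  -- quadratic part
  have hA : (∑ p ∈ S, ∑ q ∈ S, W p q * z' p * z' q) - (∑ p ∈ S, ∑ q ∈ S, W p q * z p * z q)
      = 2 * d * ∑ q ∈ S, W i q * z q := by
    rw [← Finset.sum_sub_distrib]
    have hinner : ∀ p ∈ S, (∑ q ∈ S, W p q * z' p * z' q) - (∑ q ∈ S, W p q * z p * z q)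
        = ∑ q ∈ S, (W p q * z' p * z' q - W p q * z p * z q) := by
      intro p _; rw [Finset.sum_sub_distrib]
    rw [Finset.sum_congr rfl hinner]
    rw [← Finset.add_sum_erase S _ hiS]
    have hgi : (∑ q ∈ S, (W i q * z' i * z' q - W i q * z i * z q))
        = d * ∑ q ∈ S, W i q * z q := by
      rw [Finset.mul_sum]
      apply Finset.sum_congr rfl
      intro q hq
      by_cases hqi : q = i
      · subst hqi; simp [hdiag]
      · rw [hz q hqi]; ring
    have hgp : ∀ p ∈ S.erase i, (∑ q ∈ S, (W p q * z' p * z' q - W p q * z p * z q))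
        = d * (W i p * z p) := by
      intro p hp
      have hpne : p ≠ i := Finset.ne_of_mem_erase hp
      have hpS : p ∈ S := Finset.mem_of_mem_erase hp
      have hzp : z' p = z p := hz p hpne
      rw [Finset.sum_eq_single_of_mem i hiS]
      · rw [hzp, hsym p hpS i hiS]; ring
      · intro q hq hqi
        rw [hzp, hz q hqi]; ring
    rw [hgi, Finset.sum_congr rfl hgp, ← Finset.mul_sum]
    have herase : (∑ p ∈ S.erase i, W i p * z p) = ∑ p ∈ S, W i p * z p := by
      rw [← Finset.add_sum_erase S _ hiS, hdiag]; ring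
    rw [herase]; ring
  -- linear part
  have hB : (∑ p ∈ S, z' p * (h p + ∑ q ∈ R, W p q * z' q))
      - (∑ p ∈ S, z p * (h p + ∑ q ∈ R, W p q * z q))
      = d * (h i + ∑ q ∈ R, W i q * z q) := by
    have hR' : ∀ p, (∑ q ∈ R, W p q * z' q) = ∑ q ∈ R, W p q * z q := by
      intro p; apply Finset.sum_congr rfl; intro q hq; rw [hzR q hq]
    rw [← Finset.sum_sub_distrib]
    rw [Finset.sum_eq_single_of_mem i hiS]
    · rw [hR']; ring
    · intro q hq hqi
      rw [hR', hz q hqi]; ring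
  linarith

theorem stmt11 {V : Type*} [Fintype V] [DecidableEq V] [Nonempty V]
    (W : V → V → ℝ) (h : V → ℝ) (hdiag : ∀ i, W i i = 0)
    (R S : Finset V) (hUnion : R ∪ S = Finset.univ) (hDisj : Disjoint R S)
    (hsbR : StructurallyBalanced (fun i j : {i // i ∈ R} => W i.1 j.1))
    (hsymS : ∀ i ∈ S, ∀ j ∈ S, W i j = W j i)
    (τ : {i // i ∈ R} → Act)
    (hτ : ∀ i j : {i // i ∈ R}, 0 ≤ (τ i : ℝ) * W i.1 j.1 * (τ j : ℝ))
    (hcoh : ∀ i : {i // i ∈ R},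
      ∑ j ∈ S, |W i.1 j| ≤ (∑ j ∈ R, |W i.1 j|) + (τ i : ℝ) * h i.1) :
    ∃ x : V → Act, IsNash W h x ∧ ∀ i : {i // i ∈ R}, x i.1 = τ i := by
    classical
  have memS : ∀ i : V, i ∉ R → i ∈ S := by
    intro i hi
    have hmem := Finset.mem_univ i
    rw [← hUnion, Finset.mem_union] at hmem
    tauto
  set ext : ({i // i ∈ S} → Act) → V → Act := fun y i =>
    if hi : i ∈ R then τ ⟨i, hi⟩ else y ⟨i, memS i hi⟩ with hext
  set Φ : ({i // i ∈ S} → Act) → ℝ := fun y =>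
    (∑ p ∈ S, ∑ q ∈ S, W p q * (ext y p : ℝ) * (ext y q : ℝ))
      + 2 * ∑ p ∈ S, (ext y p : ℝ) * (h p + ∑ q ∈ R, W p q * (ext y q : ℝ)) with hΦ
  obtain ⟨y₀, hy₀⟩ := Finite.exists_max Φ
  set x := ext y₀ with hx
  have hxR : ∀ i : {i // i ∈ R}, x i.1 = τ i := by
    intro i
    simp only [hx, hext]
    rw [dif_pos i.2]
  have hsplit : ∀ f : V → ℝ, (∑ j, f j) = (∑ j ∈ R, f j) + ∑ j ∈ S, f j := by
    intro f
    rw [← Finset.sum_union hDisj, hUnion]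
  refine ⟨x, ?_, hxR⟩
  intro i
  rw [br_iff W h i x (hdiag i)]
  by_cases hiR : i ∈ R
  · -- player in R
    have hxi : x i = τ ⟨i, hiR⟩ := hxR ⟨i, hiR⟩
    rw [hxi, hsplit]
    have hRsum : (∑ j ∈ R, (τ ⟨i, hiR⟩ : ℝ) * (W i j * (x j : ℝ)))
        = ∑ j ∈ R, |W i j| := by
      apply Finset.sum_congr rfl
      intro j hj
      have hxj : x j = τ ⟨j, hj⟩ := hxR ⟨j, hj⟩
      rw [hxj]
      have hnn := hτ ⟨i, hiR⟩ ⟨j, hj⟩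
      have habs : |(τ ⟨i, hiR⟩ : ℝ) * W i j * (τ ⟨j, hj⟩ : ℝ)| = |W i j| := by
        rw [abs_mul, abs_mul, act_abs, act_abs, one_mul, mul_one]
      have := abs_of_nonneg hnn
      rw [habs] at this
      linarith [this]
    have hSsum : -(∑ j ∈ S, |W i j|) ≤ ∑ j ∈ S, (τ ⟨i, hiR⟩ : ℝ) * (W i j * (x j : ℝ)) := by
      rw [← Finset.sum_neg_distrib]
      apply Finset.sum_le_sum
      intro j hj
      have habs : |(τ ⟨i, hiR⟩ : ℝ) * (W i j * (x j : ℝ))| = |W i j| := by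
        rw [abs_mul, abs_mul, act_abs, act_abs, one_mul, mul_one]
      have := neg_abs_le ((τ ⟨i, hiR⟩ : ℝ) * (W i j * (x j : ℝ)))
      rw [habs] at this
      exact this
    have hc := hcoh ⟨i, hiR⟩
    have hexpand : (τ ⟨i, hiR⟩ : ℝ) * (h i + ((∑ j ∈ R, W i j * (x j : ℝ)) + ∑ j ∈ S, W i j * (x j : ℝ)))
        = (τ ⟨i, hiR⟩ : ℝ) * h i + (∑ j ∈ R, (τ ⟨i, hiR⟩ : ℝ) * (W i j * (x j : ℝ)))
          + ∑ j ∈ S, (τ ⟨i, hiR⟩ : ℝ) * (W i j * (x j : ℝ)) := by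
      rw [← Finset.mul_sum, ← Finset.mul_sum]; ring
    rw [hexpand, hRsum]
    linarith
  · -- player in S
    have hiS : i ∈ S := memS i hiR
    by_contra hneg
    push_neg at hneg
    set b := actNeg (x i) with hb
    set y' := Function.update y₀ (⟨i, hiS⟩ : {i // i ∈ S}) b with hy'
    have hz : ∀ j : V, j ≠ i → ((ext y' j : Act) : ℝ) = ((ext y₀ j : Act) : ℝ) := by
      intro j hj
      simp only [hext]
      by_cases hjR : j ∈ R
      · rw [dif_pos hjR, dif_pos hjR]
      · rw [dif_neg hjR, dif_neg hjR, hy']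
        rw [Function.update_of_ne (by simp [Subtype.ext_iff, hj])]
    have hzi : ((ext y' i : Act) : ℝ) = -((x i : Act) : ℝ) := by
      simp only [hext]
      rw [dif_neg hiR]
      have : (⟨i, memS i hiR⟩ : {i // i ∈ S}) = ⟨i, hiS⟩ := rfl
      rw [this, hy', Function.update_self]
      rfl
    have hdiff := potential_diff W h R S hsymS i hiS hiR (hdiag i)
      (fun j => ((ext y₀ j : Act) : ℝ)) (fun j => ((ext y' j : Act) : ℝ)) hz
    have hle := hy₀ y'
    have hΦexpand : Φ y' - Φ y₀
        = 2 * (((ext y' i : Act) : ℝ) - ((ext y₀ i : Act) : ℝ))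
          * (h i + (∑ q ∈ R, W i q * ((ext y₀ q : Act) : ℝ))
            + ∑ q ∈ S, W i q * ((ext y₀ q : Act) : ℝ)) := hdiff
    have hxix : ((ext y₀ i : Act) : ℝ) = ((x i : Act) : ℝ) := rfl
    have hK : h i + (∑ q ∈ R, W i q * ((ext y₀ q : Act) : ℝ))
        + ∑ q ∈ S, W i q * ((ext y₀ q : Act) : ℝ)
        = h i + ∑ j, W i j * ((x j : Act) : ℝ) := by
      rw [hsplit (fun j => W i j * ((x j : Act) : ℝ))]
      simp only [hx]
      ring
    rw [hzi, hxix, hK] at hΦexpand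
    have hxiabs : ((x i : Act) : ℝ) * ((x i : Act) : ℝ) = 1 := by
      rcases (x i).2 with hh | hh <;> rw [hh] <;> norm_num
    nlinarith [hΦexpand, hle, hneg]
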